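/- arXiv:2101.01858 — 2 statements merged into one kernel-verified Lean document; each statement's English description precedes it below -/
import Mathlib

section
/- Let K be a complete discretely valued field with perfect residue field of characteristic p, let k ≥ 2, and let f(X) = X^{p^k} + (-1)^{b_0} ω π_K^{A_0} X^{p^k - b_0} + (-1)^{p^k} π_K a be an Eisenstein polynomial over K with p ∤ b_0, 1 ≤ b_0 ≤ p^k, 1 ≤ A_0 ≤ e_K, ω a nonzero Teichmüller representative, and a ≡ 1 (mod M_K). Then the extension L = K(π_L) generated by a root π_L of f has indices of inseparability i_k = 0 and i_j = p^k A_0 - b_0 for 0 ≤ j ≤ k - 1; in particular L/K has exactly two distinct indices of inseparability. -/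
/-!
Comparing the valuations of the three terms of `f(π_L) = 0` (the minimum must be attained
twice) gives `v(π_L) = 1/p^k`. The monomials `c π_L^i` with `c ∈ K` and `i < p^k` then have
valuations in distinct classes modulo `ℤ`, so no nonzero polynomial of degree `< p^k` kills `π_L`
and `f` is its minimal polynomial. The only nonzero `c_h` are `c_{b₀}` (valuation `A₀`,
`v_p(b₀) = 0`) and `c_{p^k}` (valuation `1`, `v_p(p^k) = k`), whence `ĩ_j = p^k A₀ - b₀` for
`j < k` and `ĩ_k = 0`; the bound `A₀ ≤ e_K` makes the term `j' = k` irrelevant for `i_j`, `j < k`.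
-/

open Polynomial Classical

/-- A rank-one valuation `v` on `L`, written additively with values in `ℚ` and
junk value at `0`, which restricts to a normalized (`ℤ`-valued, surjective onto
`ℤ`) complete discrete valuation on the subfield `K`, and whose values on `L`
lie in `(1/n)ℤ`. -/
structure ExtValuation (K L : Type) [Field K] [Field L] [Algebra K L]
    (v : L → ℚ) (n : ℕ) : Prop where
  map_mul : ∀ x y : L, x ≠ 0 → y ≠ 0 → v (x * y) = v x + v y
  map_add : ∀ x y : L, x ≠ 0 → y ≠ 0 → x + y ≠ 0 → min (v x) (v y) ≤ v (x + y)
  int_on_base : ∀ x : K, x ≠ 0 → ∃ m : ℤ, v (algebraMap K L x) = m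
  exists_uniformizer : ∃ x : K, x ≠ 0 ∧ v (algebraMap K L x) = 1
  denom : ∀ x : L, x ≠ 0 → ∃ m : ℤ, v x = (m : ℚ) / n
  complete : ∀ a : ℕ → K,
    (∀ N : ℚ, ∃ M : ℕ, ∀ i ≥ M, ∀ j ≥ M,
      a i = a j ∨ N ≤ v (algebraMap K L (a i - a j))) →
    ∃ l : K, ∀ N : ℚ, ∃ M : ℕ, ∀ i ≥ M,
      a i = l ∨ N ≤ v (algebraMap K L (a i - l))

/-- The residue field of `K` has characteristic `p`: `p` lies in the maximal
ideal of the valuation ring of `K`. -/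
def ResidueCharP (K L : Type) [Field K] [Field L] [Algebra K L]
    (v : L → ℚ) (p : ℕ) : Prop :=
  (p : K) = 0 ∨ 0 < v (algebraMap K L (p : K))

/-- The residue field of `K` is perfect: every unit of the valuation ring is a
`p`-th power modulo the maximal ideal. -/
def PerfectResidue (K L : Type) [Field K] [Field L] [Algebra K L]
    (v : L → ℚ) (p : ℕ) : Prop :=
  ∀ x : K, x ≠ 0 → v (algebraMap K L x) = 0 →
    ∃ y : K, x = y ^ p ∨ (x - y ^ p ≠ 0 ∧ 0 < v (algebraMap K L (x - y ^ p)))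

/-- `ω` is a nonzero Teichmüller representative of `K`: a unit of the valuation
ring admitting `p^m`-th roots for every `m`. -/
def IsTeichmuller (K L : Type) [Field K] [Field L] [Algebra K L]
    (v : L → ℚ) (p : ℕ) (ω : K) : Prop :=
  ω ≠ 0 ∧ v (algebraMap K L ω) = 0 ∧ ∀ m : ℕ, ∃ y : K, y ^ p ^ m = ω

/-- `ĩ_j = min{n·v(c_h) − h : 1 ≤ h ≤ n, v_p(h) ≤ j}`, computed in `ℕ∞` from
the function `w h = n·(valuation of c_h)` data `w h = v(c_h)`. -/
noncomputable def itildeIdx (p n : ℕ) (w : ℕ → ℕ∞) (j : ℕ) : ℕ∞ :=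
  ⨅ h : {h : ℕ // 1 ≤ h ∧ h ≤ n ∧ padicValNat p h ≤ j},
    ((n : ℕ∞) * w h.1 - (h.1 : ℕ∞))

/-- `i_j = min{ĩ_{j'} + (j' − j) n e_K : j ≤ j' ≤ k}`. -/
noncomputable def insepIdx (p n k : ℕ) (eK : ℕ∞) (w : ℕ → ℕ∞) (j : ℕ) : ℕ∞ :=
  ⨅ j' : {j' : ℕ // j ≤ j' ∧ j' ≤ k},
    itildeIdx p n w j'.1 + ((j'.1 : ℕ∞) - (j : ℕ∞)) * (n : ℕ∞) * eK

/-- The valuation (in `ℕ∞`, with `⊤` for the zero coefficient) of the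
coefficient `c_h` of the minimal polynomial
`X^n − c_1 X^{n-1} + ⋯ + (−1)^n c_n` of `πL`, so that
`(−1)^h c_h = coeff (n−h)`. -/
noncomputable def coeffVal (K L : Type) [Field K] [Field L] [Algebra K L]
    (v : L → ℚ) (n : ℕ) (πL : L) (h : ℕ) : ℕ∞ :=
  if (minpoly K πL).coeff (n - h) = 0 then ⊤
  else ((v (algebraMap K L ((minpoly K πL).coeff (n - h)))).num).toNat

/-- `e_K = v_K(p)`, with `e_K = ∞` when `char K = p`. -/
noncomputable def eAbs (K L : Type) [Field K] [Field L] [Algebra K L]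
    (v : L → ℚ) (p : ℕ) : ℕ∞ :=
  if (p : K) = 0 then ⊤ else ((v (algebraMap K L (p : K))).num).toNat

/-- `L/K` has indices of inseparability `i 0, …, i k`: the indices computed
from the minimal polynomial of a uniformizer of `L` are given by `i`. -/
def HasInsepIndices (K L : Type) [Field K] [Field L] [Algebra K L]
    (v : L → ℚ) (p n k : ℕ) (i : ℕ → ℕ∞) : Prop :=
  ∃ πL : L, v πL = 1 / (n : ℚ) ∧ Algebra.adjoin K {πL} = ⊤ ∧
    ∀ j ≤ k, insepIdx p n k (eAbs K L v p) (coeffVal K L v n πL) j = i j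

theorem X_pow_add_C_mul_X_pow_add_C_eq_trinomial {R : Type*} [CommSemiring R] (d m : ℕ)
    (α β : R) : X ^ d + C α * X ^ m + C β = trinomial 0 m d β α 1 := by
  simp only [trinomial_def, pow_zero, mul_one, map_one, one_mul]
  ring

namespace ExtValuation

variable {K L : Type} [Field K] [Field L] [Algebra K L] {v : L → ℚ} {n : ℕ}
  (hv : ExtValuation K L v n)
include hv

theorem map_one : v 1 = 0 := by
  have := hv.map_mul 1 1 one_ne_zero one_ne_zero
  rw [mul_one] at this
  linarith

theorem map_neg {x : L} (hx : x ≠ 0) : v (-x) = v x := by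
  have h := hv.map_mul x x hx hx
  have h' := hv.map_mul (-x) (-x) (neg_ne_zero.2 hx) (neg_ne_zero.2 hx)
  rw [neg_mul_neg] at h'
  linarith

theorem map_pow {x : L} (hx : x ≠ 0) (m : ℕ) : v (x ^ m) = m * v x := by
  induction m with
  | zero => simpa using hv.map_one
  | succ m ih =>
    rw [pow_succ, hv.map_mul _ _ (pow_ne_zero _ hx) hx, ih]
    push_cast
    ring

theorem map_neg_one_pow_mul_mul {x y : L} (hx : x ≠ 0) (hy : y ≠ 0) (b : ℕ) :
    v ((-1) ^ b * x * y) = v x + v y := by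
  have h1 : (-1 : L) ≠ 0 := neg_ne_zero.2 one_ne_zero
  rw [mul_assoc, hv.map_mul _ _ (pow_ne_zero _ h1) (mul_ne_zero hx hy), hv.map_pow h1,
    hv.map_neg one_ne_zero, hv.map_one, hv.map_mul _ _ hx hy]
  ring

theorem map_add_of_lt {x y : L} (hx : x ≠ 0) (hy : y ≠ 0) (h : v x < v y) :
    x + y ≠ 0 ∧ v (x + y) = v x := by
  have hxy : x + y ≠ 0 := by
    intro h0
    rw [eq_neg_of_add_eq_zero_right h0, hv.map_neg hx] at h
    exact lt_irrefl _ h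
  refine ⟨hxy, le_antisymm ?_ (min_eq_left h.le ▸ hv.map_add x y hx hy hxy)⟩
  have h' := hv.map_add (x + y) (-y) hxy (neg_ne_zero.2 hy) (by simpa using hx)
  rw [add_neg_cancel_right, hv.map_neg hy] at h'
  by_contra! hlt
  exact (lt_min hlt h).not_ge h'

theorem min_le_of_add_add_eq_zero {x y z : L} (hx : x ≠ 0) (hy : y ≠ 0) (hz : z ≠ 0)
    (h : x + y + z = 0) : min (v y) (v z) ≤ v x := by
  have hyz : y + z = -x := by linear_combination h
  have := hv.map_add y z hy hz (by rw [hyz]; exact neg_ne_zero.2 hx)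
  rwa [hyz, hv.map_neg hx] at this

theorem ne_zero_and_map_eq_zero {u : L} (hu : u = 1 ∨ (u - 1 ≠ 0 ∧ 0 < v (u - 1))) :
    u ≠ 0 ∧ v u = 0 := by
  rcases hu with rfl | ⟨hu1, hvu1⟩
  · exact ⟨one_ne_zero, hv.map_one⟩
  · have h := hv.map_add_of_lt one_ne_zero hu1 (hv.map_one ▸ hvu1)
    rw [add_sub_cancel] at h
    exact ⟨h.1, h.2.trans hv.map_one⟩

theorem sum_ne_zero_and_exists_map_sum_eq {ι : Type*} {s : Finset ι}
    {g : ι → L} (h0 : ∀ i ∈ s, g i ≠ 0) (hinj : Set.InjOn (v ∘ g) s) (hs : s.Nonempty) :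
    s.sum g ≠ 0 ∧ ∃ i ∈ s, v (s.sum g) = v (g i) := by
  induction s using Finset.induction_on with
  | empty => simp at hs
  | @insert a s ha ih =>
    have hga := h0 a (Finset.mem_insert_self a s)
    rw [Finset.sum_insert ha]
    rcases s.eq_empty_or_nonempty with rfl | hs'
    · simpa using hga
    obtain ⟨hsum, i, hi, hvi⟩ := ih (fun i hi => h0 i (Finset.mem_insert_of_mem hi))
      (hinj.mono (Finset.coe_subset.2 (Finset.subset_insert a s))) hs'
    have hne : v (g a) ≠ v (s.sum g) := by
      rw [hvi]
      intro h
      exact ha (hinj (Finset.mem_insert_self a s) (Finset.mem_insert_of_mem hi) h ▸ hi)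
    rcases hne.lt_or_gt with hlt | hgt
    · exact ⟨(hv.map_add_of_lt hga hsum hlt).1, a, Finset.mem_insert_self a s,
        (hv.map_add_of_lt hga hsum hlt).2⟩
    · obtain ⟨h1, h2⟩ := hv.map_add_of_lt hsum hga hgt
      rw [add_comm] at h1 h2
      exact ⟨h1, i, Finset.mem_insert_of_mem hi, h2.trans hvi⟩

theorem map_eq_of_trinomial_root {x α β : L} {d m : ℕ} (hm : 0 < m) (hmd : m < d)
    (hα : α ≠ 0) (hvα : 1 ≤ v α) (hβ : β ≠ 0) (hvβ : v β = 1) (hx0 : x ≠ 0)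
    (hx : x ^ d + α * x ^ m + β = 0) : v x = 1 / d := by
  have h1 : x ^ d ≠ 0 := pow_ne_zero _ hx0
  have h2 : α * x ^ m ≠ 0 := mul_ne_zero hα (pow_ne_zero _ hx0)
  have e1 := hv.min_le_of_add_add_eq_zero h1 h2 hβ hx
  have e2 := hv.min_le_of_add_add_eq_zero h2 h1 hβ (by linear_combination hx)
  have e3 := hv.min_le_of_add_add_eq_zero hβ h1 h2 (by linear_combination hx)
  rw [hv.map_mul _ _ hα (pow_ne_zero _ hx0), hv.map_pow hx0, hv.map_pow hx0, hvβ] at e1 e2 e3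
  have hmQ : (0 : ℚ) < m := by exact_mod_cast hm
  have hmdQ : (m : ℚ) < d := by exact_mod_cast hmd
  rw [eq_div_iff (by linarith), mul_comm]
  rcases lt_trichotomy (d * v x) 1 with hlt | heq | hgt
  · have : v α + m * v x ≤ d * v x := by
      rcases min_le_iff.1 e1 with h | h
      · exact h
      · linarith
    nlinarith
  · exact heq
  · have h2 : v α + m * v x ≤ 1 := by
      rcases min_le_iff.1 e3 with h | h <;> linarith
    have h3 : 1 ≤ v α + m * v x := by
      rcases min_le_iff.1 e2 with h | h <;> linarith
    have : 0 < v x := by nlinarith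
    nlinarith

theorem aeval_ne_zero_of_natDegree_lt {x : L} (hx0 : x ≠ 0) (hx : v x = 1 / n) {g : K[X]}
    (hg : g ≠ 0) (hdeg : g.natDegree < n) : aeval x g ≠ 0 := by
  have hc : ∀ i ∈ g.support, algebraMap K L (g.coeff i) ≠ 0 := fun i hi =>
    (_root_.map_ne_zero _).2 (mem_support_iff.1 hi)
  have hterm : ∀ i ∈ g.support, ∃ c : ℤ, v (algebraMap K L (g.coeff i) * x ^ i) = c + i / n :=
    fun i hi => by
      obtain ⟨c, hc'⟩ := hv.int_on_base _ (mem_support_iff.1 hi)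
      refine ⟨c, ?_⟩
      rw [hv.map_mul _ _ (hc i hi) (pow_ne_zero _ hx0), hv.map_pow hx0, hc', hx]
      ring
  have hinj : Set.InjOn (v ∘ fun i => algebraMap K L (g.coeff i) * x ^ i) g.support := by
    intro i hi j hj hij
    obtain ⟨ci, hci⟩ := hterm i hi
    obtain ⟨cj, hcj⟩ := hterm j hj
    have hin : i < n := (le_natDegree_of_mem_supp i hi).trans_lt hdeg
    have hjn : j < n := (le_natDegree_of_mem_supp j hj).trans_lt hdeg
    have hnQ : (n : ℚ) ≠ 0 := by exact_mod_cast (by omega : n ≠ 0)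
    have hQ : (i : ℚ) + n * ci = j + n * cj := by
      simp only [Function.comp_apply, hci, hcj] at hij
      field_simp at hij
      linarith
    have hZ : (i : ℤ) + n * ci = j + n * cj := by exact_mod_cast hQ
    have := congrArg (· % (n : ℤ)) hZ
    simp only [Int.add_mul_emod_self_left] at this
    rw [Int.emod_eq_of_lt (by omega) (by omega), Int.emod_eq_of_lt (by omega) (by omega)] at this
    exact_mod_cast this
  rw [aeval_def, eval₂_eq_sum, Polynomial.sum_def]
  exact (hv.sum_ne_zero_and_exists_map_sum_eq (fun i hi => mul_ne_zero (hc i hi)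
    (pow_ne_zero _ hx0)) hinj (nonempty_support_iff.2 hg)).1

theorem minpoly_eq {x : L} (hx0 : x ≠ 0) (hx : v x = 1 / n) {f : K[X]} (hf : f.Monic)
    (hdeg : f.natDegree = n) (hfx : aeval x f = 0) : minpoly K x = f := by
  refine (minpoly.unique K x hf hfx fun q hq hqx => ?_).symm
  rw [degree_eq_natDegree hf.ne_zero, degree_eq_natDegree hq.ne_zero, Nat.cast_le, hdeg]
  by_contra! hlt
  exact hv.aeval_ne_zero_of_natDegree_lt hx0 hx hq.ne_zero hlt hqx

theorem map_eq_and_minpoly_eq_of_aeval_trinomial {x : L} {α β : K}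
    {m : ℕ} (hm : 0 < m) (hmn : m < n) (hα : α ≠ 0) (hvα : 1 ≤ v (algebraMap K L α))
    (hβ : β ≠ 0) (hvβ : v (algebraMap K L β) = 1)
    (hx : aeval x (X ^ n + C α * X ^ m + C β) = 0) :
    v x = 1 / n ∧ minpoly K x = X ^ n + C α * X ^ m + C β := by
  have hx0 : x ≠ 0 := by
    rintro rfl
    simp [hβ, hm.ne', (hm.trans hmn).ne'] at hx
  have hvx : v x = 1 / n := hv.map_eq_of_trinomial_root hm hmn ((_root_.map_ne_zero _).2 hα)
    hvα ((_root_.map_ne_zero _).2 hβ) hvβ hx0 (by simpa using hx)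
  rw [X_pow_add_C_mul_X_pow_add_C_eq_trinomial] at hx ⊢
  exact ⟨hvx, hv.minpoly_eq hx0 hvx (trinomial_monic hm hmn)
    (trinomial_natDegree hm hmn one_ne_zero) hx⟩

end ExtValuation

theorem coeffVal_of_minpoly_eq_trinomial {K L : Type} [Field K] [Field L] [Algebra K L]
    {v : L → ℚ} {x : L} {d b A : ℕ} {α β : K} (hb : 0 < b) (hbd : b < d)
    (hα : α ≠ 0) (hvα : v (algebraMap K L α) = A) (hβ : β ≠ 0)
    (hvβ : v (algebraMap K L β) = 1) (hmin : minpoly K x = X ^ d + C α * X ^ (d - b) + C β)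
    {h : ℕ} (h1 : 1 ≤ h) (hhd : h ≤ d) :
    coeffVal K L v d x h = if h = b then (A : ℕ∞) else if h = d then 1 else ⊤ := by
  have hcoeff : (minpoly K x).coeff (d - h) = if h = b then α else if h = d then β else 0 := by
    rw [hmin]
    simp only [coeff_add, coeff_X_pow, coeff_C_mul, coeff_C]
    split_ifs <;> first | (exfalso; omega) | ring
  unfold coeffVal
  rw [hcoeff]
  split_ifs <;> simp_all

section Indices

variable {p n : ℕ} {w : ℕ → ℕ∞}

theorem itildeIdx_eq_zero {j : ℕ} (hn : 1 ≤ n) (hwn : w n = 1) (hj : padicValNat p n ≤ j) :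
    itildeIdx p n w j = 0 :=
  nonpos_iff_eq_zero.1 <| iInf_le_of_le ⟨n, hn, le_rfl, hj⟩ (by simp [hwn])

theorem itildeIdx_eq_of_trinomial {b A j : ℕ} (hb : 1 ≤ b) (hbn : b ≤ n)
    (hbj : padicValNat p b ≤ j) (hjn : j < padicValNat p n)
    (hw : ∀ h, 1 ≤ h → h ≤ n → w h = if h = b then (A : ℕ∞) else if h = n then 1 else ⊤) :
    itildeIdx p n w j = ((n * A - b : ℕ) : ℕ∞) := by
  have hwb : (n : ℕ∞) * w b - b = ((n * A - b : ℕ) : ℕ∞) := by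
    rw [hw b hb hbn, if_pos rfl]
    norm_cast
  refine le_antisymm (iInf_le_of_le ⟨b, hb, hbn, hbj⟩ hwb.le) (le_iInf fun ⟨h, h1, hn, hj⟩ => ?_)
  by_cases hhb : h = b
  · subst hhb
    exact hwb.ge
  · have hhn : h ≠ n := by rintro rfl; omega
    have hn0 : (n : ℕ∞) ≠ 0 := by exact_mod_cast (by omega : n ≠ 0)
    simp [hw h h1 hn, hhb, hhn, ENat.mul_top hn0]

variable {k : ℕ} {e : ℕ∞}

theorem insepIdx_self : insepIdx p n k e w k = itildeIdx p n w k := by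
  refine le_antisymm (iInf_le_of_le ⟨k, le_rfl, le_rfl⟩ (by simp))
    (le_iInf fun ⟨j', hj', hj'k⟩ => ?_)
  obtain rfl : j' = k := le_antisymm hj'k hj'
  exact le_self_add

theorem insepIdx_eq_of_lt {j : ℕ} {c : ℕ∞} (hjk : j < k)
    (hc : ∀ j', j ≤ j' → j' < k → itildeIdx p n w j' = c)
    (hck : c ≤ itildeIdx p n w k + n * e) : insepIdx p n k e w j = c := by
  refine le_antisymm (iInf_le_of_le ⟨j, le_rfl, hjk.le⟩ (by simp [hc j le_rfl hjk]))
    (le_iInf fun ⟨j', hj', hj'k⟩ => ?_)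
  rcases hj'k.lt_or_eq with hlt | rfl
  · exact (hc j' hj' hlt).ge.trans le_self_add
  · refine hck.trans (add_le_add_right ?_ _)
    have : (1 : ℕ∞) ≤ (j' : ℕ∞) - j := by
      rw [← ENat.natCast_sub]
      exact_mod_cast (by omega : 1 ≤ j' - j)
    calc (n : ℕ∞) * e = 1 * n * e := by rw [one_mul]
      _ ≤ ((j' : ℕ∞) - j) * n * e := by gcongr

end Indices

theorem insepIdx_of_trinomial {p k b A e j : ℕ} {w : ℕ → ℕ∞} (hp : p.Prime) (hb : 1 ≤ b)
    (hbq : b < p ^ k) (hpb : ¬ p ∣ b) (hAe : A ≤ e)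
    (hw : ∀ h, 1 ≤ h → h ≤ p ^ k → w h = if h = b then (A : ℕ∞) else if h = p ^ k then 1 else ⊤)
    (hj : j ≤ k) :
    insepIdx p (p ^ k) k e w j = if j = k then 0 else ((p ^ k * A - b : ℕ) : ℕ∞) := by
  have : Fact p.Prime := ⟨hp⟩
  have hwq : w (p ^ k) = 1 := by simp [hw _ (by omega) le_rfl, hbq.ne']
  have hk : itildeIdx p (p ^ k) w k = 0 :=
    itildeIdx_eq_zero (by omega) hwq (padicValNat.prime_pow k).le
  rcases hj.lt_or_eq with hjk | rfl
  · rw [if_neg hjk.ne]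
    refine insepIdx_eq_of_lt hjk (fun j' _ hj'k => itildeIdx_eq_of_trinomial hb hbq.le ?_ ?_ hw) ?_
    · simp [padicValNat.eq_zero_of_not_dvd hpb]
    · rwa [padicValNat.prime_pow]
    · rw [hk, zero_add]
      exact_mod_cast (Nat.sub_le _ _).trans (Nat.mul_le_mul_left _ hAe)
  · rw [if_pos rfl, insepIdx_self, hk]

theorem stmt11_general (p k : ℕ) (hp : p.Prime) (hk : 2 ≤ k)
    (K L : Type) [Field K] [Field L] [Algebra K L]
    (v : L → ℚ) (hv : ExtValuation K L v (p ^ k))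
    (πK : K) (hπK : πK ≠ 0 ∧ v (algebraMap K L πK) = 1)
    (eK : ℕ) (heK : eAbs K L v p = (eK : ℕ∞))
    (A0 b0 : ℕ) (hb0 : 1 ≤ b0 ∧ b0 ≤ p ^ k) (hpb0 : ¬ p ∣ b0)
    (hA0 : 1 ≤ A0 ∧ A0 ≤ eK)
    (ω : K) (hω : IsTeichmuller K L v p ω)
    (a : K) (ha : a = 1 ∨ (a - 1 ≠ 0 ∧ 0 < v (algebraMap K L (a - 1))))
    (f : Polynomial K)
    (hf : f = X ^ p ^ k + C ((-1 : K) ^ b0 * ω * πK ^ A0) * X ^ (p ^ k - b0)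
      + C ((-1 : K) ^ p ^ k * πK * a))
    (πL : L) (hroot : Polynomial.aeval πL f = 0)
    (hgen : Algebra.adjoin K {πL} = ⊤) :
    HasInsepIndices K L v p (p ^ k) k
      (fun j => if j = k then 0 else ((p ^ k * A0 - b0 : ℕ) : ℕ∞)) := by
  obtain ⟨hπK0, hvπK⟩ := hπK
  obtain ⟨hω0, hvω, -⟩ := hω
  have hb0q : b0 < p ^ k := hb0.2.lt_of_ne
    fun h => hpb0 (h ▸ dvd_pow_self p (by omega))
  have hπK0' : algebraMap K L πK ≠ 0 := (_root_.map_ne_zero _).2 hπK0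
  have hω0' : algebraMap K L ω ≠ 0 := (_root_.map_ne_zero _).2 hω0
  obtain ⟨ha0, hva⟩ := hv.ne_zero_and_map_eq_zero (u := algebraMap K L a)
    (by simpa [sub_eq_zero] using ha)
  set α := (-1 : K) ^ b0 * ω * πK ^ A0 with hα
  set β := (-1 : K) ^ p ^ k * πK * a with hβ
  have hvα : v (algebraMap K L α) = A0 := by
    simp only [hα, map_mul, map_pow, map_neg, map_one]
    rw [hv.map_neg_one_pow_mul_mul hω0' (pow_ne_zero _ hπK0'), hv.map_pow hπK0', hvω, hvπK]
    ring
  have hvβ : v (algebraMap K L β) = 1 := by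
    simp only [hβ, map_mul, map_pow, map_neg, map_one]
    rw [hv.map_neg_one_pow_mul_mul hπK0' ha0, hvπK, hva, add_zero]
  have hα0 : α ≠ 0 := by simp [hα, hω0, hπK0]
  have hβ0 : β ≠ 0 := by simp [hβ, hπK0, (_root_.map_ne_zero (algebraMap K L)).1 ha0]
  obtain ⟨hvπL, hmin⟩ := hv.map_eq_and_minpoly_eq_of_aeval_trinomial (by omega : 0 < p ^ k - b0)
    (by omega) hα0 (by rw [hvα]; exact_mod_cast hA0.1) hβ0 hvβ (hf ▸ hroot)
  refine ⟨πL, hvπL, hgen, fun j hj => ?_⟩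
  rw [heK]
  exact insepIdx_of_trinomial hp hb0.1 hb0q hpb0 hA0.2 (fun h h1 h2 =>
    coeffVal_of_minpoly_eq_trinomial hb0.1 hb0q hα0 hvα hβ0 hvβ hmin h1 h2) hj

/-- Remark 4.2: a root of the Eisenstein polynomial
`X^{p^k} + (−1)^{b₀} ω π_K^{A₀} X^{p^k−b₀} + (−1)^{p^k} π_K a` with `p ∤ b₀`,
`1 ≤ b₀ ≤ p^k`, `1 ≤ A₀ ≤ e_K`, `ω` a nonzero Teichmüller representative and
`a ≡ 1 (mod M_K)` generates an extension `L/K` with indices of inseparability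
`i_k = 0` and `i_j = p^k A₀ − b₀` for `0 ≤ j ≤ k−1` (two distinct indices). -/
theorem stmt11 (p k : ℕ) (hp : p.Prime) (hk : 2 ≤ k)
    (K L : Type) [Field K] [Field L] [Algebra K L]
    (v : L → ℚ) (hv : ExtValuation K L v (p ^ k))
    (hres : ResidueCharP K L v p) (hperf : PerfectResidue K L v p)
    (πK : K) (hπK : πK ≠ 0 ∧ v (algebraMap K L πK) = 1)
    (eK : ℕ) (heK : eAbs K L v p = (eK : ℕ∞))
    (A0 b0 : ℕ) (hb0 : 1 ≤ b0 ∧ b0 ≤ p ^ k) (hpb0 : ¬ p ∣ b0)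
    (hA0 : 1 ≤ A0 ∧ A0 ≤ eK)
    (ω : K) (hω : IsTeichmuller K L v p ω)
    (a : K) (ha : a = 1 ∨ (a - 1 ≠ 0 ∧ 0 < v (algebraMap K L (a - 1))))
    (f : Polynomial K)
    (hf : f = X ^ p ^ k + C ((-1 : K) ^ b0 * ω * πK ^ A0) * X ^ (p ^ k - b0)
      + C ((-1 : K) ^ p ^ k * πK * a))
    (πL : L) (hroot : Polynomial.aeval πL f = 0)
    (hgen : Algebra.adjoin K {πL} = ⊤) :
    HasInsepIndices K L v p (p ^ k) k
      (fun j => if j = k then 0 else ((p ^ k * A0 - b0 : ℕ) : ℕ∞)) :=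
  stmt11_general p k hp hk K L v hv πK hπK eK heK A0 b0 hb0 hpb0 hA0 ω hω a ha f hf πL hroot hgen
end

section
/- Let K be a complete discretely valued field of residue characteristic 3 with uniformizer π_K, and let L = K(π_L) where π_L is a root of the Eisenstein polynomial f(X) = X^9 + π_K X^7 - π_K X^6 + π_K X^3 - π_K. Then L/K is totally ramified of degree 9 with indices of inseparability i_0 = 7, i_1 = 3, i_2 = 0. -/
open Polynomial Classical

namespace Stmt16Aux

variable {K L : Type} [Field K] [Field L] [Algebra K L] {v : L → ℚ} {n : ℕ}

theorem v_one (hv : ExtValuation K L v n) : v (1 : L) = 0 := by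
  have h := hv.map_mul 1 1 one_ne_zero one_ne_zero
  rw [one_mul] at h; linarith

theorem v_neg_one (hv : ExtValuation K L v n) : v (-1 : L) = 0 := by
  have h := hv.map_mul (-1) (-1) (by norm_num) (by norm_num)
  rw [neg_one_mul, neg_neg, v_one hv] at h; linarith

theorem v_neg (hv : ExtValuation K L v n) {x : L} (hx : x ≠ 0) : v (-x) = v x := by
  have h := hv.map_mul (-1) x (by norm_num) hx
  rw [neg_one_mul, v_neg_one hv] at h; linarith

theorem v_pow (hv : ExtValuation K L v n) {x : L} (hx : x ≠ 0) (k : ℕ) :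
    v (x ^ k) = k * v x := by
  induction k with
  | zero => simpa using v_one hv
  | succ m ih =>
    have h := hv.map_mul (x ^ m) x (pow_ne_zero _ hx) hx
    rw [← pow_succ] at h
    rw [h, ih]; push_cast; ring

theorem v_add_ge (hv : ExtValuation K L v n) {x y : L} {c : ℚ} (hxy : x + y ≠ 0)
    (hx : x = 0 ∨ c ≤ v x) (hy : y = 0 ∨ c ≤ v y) : c ≤ v (x + y) := by
  by_cases hx0 : x = 0
  · subst hx0
    rw [zero_add] at hxy ⊢
    rcases hy with rfl | hy
    · exact absurd rfl hxy
    · exact hy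
  by_cases hy0 : y = 0
  · subst hy0
    rw [add_zero] at hxy ⊢
    rcases hx with rfl | hx
    · exact absurd rfl hxy
    · exact hx
  rcases hx with rfl | hx
  · exact absurd rfl hx0
  rcases hy with rfl | hy
  · exact absurd rfl hy0
  exact le_trans (le_min hx hy) (hv.map_add x y hx0 hy0 hxy)

theorem v_add_eq (hv : ExtValuation K L v n) {x y : L} (hx : x ≠ 0)
    (hy : y = 0 ∨ (y ≠ 0 ∧ v x < v y)) : v (x + y) = v x := by
  rcases hy with rfl | ⟨hy0, hy⟩
  · rw [add_zero]
  have hxy : x + y ≠ 0 := by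
    intro h
    have hyx : y = -x := by linear_combination h
    rw [hyx, v_neg hv hx] at hy
    exact absurd hy (lt_irrefl _)
  have h1 : v x ≤ v (x + y) :=
    le_trans (le_min le_rfl hy.le) (hv.map_add x y hx hy0 hxy)
  have h3 : min (v (x + y)) (v y) ≤ v x := by
    have := hv.map_add (x + y) (-y) hxy (neg_ne_zero.mpr hy0) (by simpa using hx)
    rw [add_neg_cancel_right, v_neg hv hy0] at this
    exact this
  have h4 : v (x + y) ≤ v x := by
    rcases min_le_iff.mp h3 with h | h
    · exact h
    · linarith
  linarith

theorem v_piL (hv : ExtValuation K L v n) {a πL : L} (ha0 : a ≠ 0) (ha : v a = 1)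
    (hπ : πL ≠ 0) (heq : πL ^ 9 = a * (1 - πL ^ 3 + πL ^ 6 - πL ^ 7)) :
    v πL = 1 / 9 := by
  obtain ⟨u, hu⟩ : ∃ u : L, u = 1 - πL ^ 3 + πL ^ 6 - πL ^ 7 := ⟨_, rfl⟩
  rw [← hu] at heq
  obtain ⟨t, ht⟩ : ∃ t : ℚ, t = v πL := ⟨_, rfl⟩
  have hu0 : u ≠ 0 := by
    intro h
    rw [h, mul_zero] at heq
    exact pow_ne_zero 9 hπ heq
  have hmain : 9 * t = 1 + v u := by
    have h1 := hv.map_mul a u ha0 hu0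
    rw [← heq, v_pow hv hπ 9, ha, ← ht] at h1
    push_cast at h1
    linarith
  have hv3 : v (πL ^ 3) = 3 * t := by rw [v_pow hv hπ, ← ht]; norm_num
  have hv6 : v (πL ^ 6) = 6 * t := by rw [v_pow hv hπ, ← ht]; norm_num
  have hv7 : v (πL ^ 7) = 7 * t := by rw [v_pow hv hπ, ← ht]; norm_num
  have hv3' : v (-πL ^ 3) = 3 * t := by rw [v_neg hv (pow_ne_zero _ hπ)]; exact hv3
  have hv7' : v (-πL ^ 7) = 7 * t := by rw [v_neg hv (pow_ne_zero _ hπ)]; exact hv7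
  suffices hts : t = 1 / 9 by rw [← ht]; exact hts
  rcases lt_trichotomy t 0 with hlt | heq0 | hgt
  · -- t < 0 : v u = 7 t, so 9t = 1 + 7t, t = 1/2 > 0, contradiction
    exfalso
    have hb : ∀ b : L, b = 1 - πL ^ 3 + πL ^ 6 → b = 0 ∨ (b ≠ 0 ∧ v (-πL ^ 7) < v b) := by
      intro b hbdef
      by_cases hb0 : b = 0
      · exact Or.inl hb0
      refine Or.inr ⟨hb0, ?_⟩
      rw [hv7']
      refine lt_of_lt_of_le (show 7 * t < 6 * t by linarith) ?_
      have e : b = ((1 : L) + (-πL ^ 3)) + πL ^ 6 := by rw [hbdef]; ring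
      rw [e] at hb0 ⊢
      refine v_add_ge hv (c := 6 * t) hb0 ?_ (Or.inr (le_of_eq hv6.symm))
      by_cases hc0 : (1 : L) + (-πL ^ 3) = 0
      · exact Or.inl hc0
      refine Or.inr (v_add_ge hv hc0 (Or.inr (by rw [v_one hv]; linarith)) ?_)
      exact Or.inr (by rw [hv3']; linarith)
    have hvu : v u = 7 * t := by
      have e : u = -πL ^ 7 + (1 - πL ^ 3 + πL ^ 6) := by rw [hu]; ring
      rw [e, v_add_eq hv (neg_ne_zero.mpr (pow_ne_zero _ hπ)) (hb _ rfl), hv7']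
    rw [hvu] at hmain
    linarith
  · -- t = 0 : v u ≥ 0 but v u = -1
    exfalso
    have hvu : 0 ≤ v u := by
      have e1 : u = (((1 : L) + (-πL ^ 3)) + πL ^ 6) + (-πL ^ 7) := by rw [hu]; ring
      rw [e1] at hu0 ⊢
      refine v_add_ge hv hu0 ?_ (Or.inr (by rw [hv7', heq0]; norm_num))
      by_cases h60 : ((1 : L) + (-πL ^ 3)) + πL ^ 6 = 0
      · exact Or.inl h60
      refine Or.inr (v_add_ge hv h60 ?_ (Or.inr (by rw [hv6, heq0]; norm_num)))
      by_cases h30 : (1 : L) + (-πL ^ 3) = 0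
      · exact Or.inl h30
      refine Or.inr (v_add_ge hv h30 (Or.inr (by rw [v_one hv]))
        (Or.inr (by rw [hv3', heq0]; norm_num)))
    linarith
  · -- t > 0 : v u = 0
    have hvu : v u = 0 := by
      have e1 : u = 1 + (-πL ^ 3 + πL ^ 6 - πL ^ 7) := by rw [hu]; ring
      rw [e1, v_add_eq hv one_ne_zero, v_one hv]
      by_cases hs0 : (-πL ^ 3 + πL ^ 6) + (-πL ^ 7) = 0
      · exact Or.inl (by rw [← hs0]; ring)
      refine Or.inr ⟨by intro h; exact hs0 (by rw [← h]; ring), ?_⟩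
      rw [v_one hv]
      have e2 : -πL ^ 3 + πL ^ 6 - πL ^ 7 = (-πL ^ 3 + πL ^ 6) + (-πL ^ 7) := by ring
      rw [e2]
      refine lt_of_lt_of_le (show (0:ℚ) < 3 * t by linarith) ?_
      refine v_add_ge hv hs0 ?_ (Or.inr (by rw [hv7']; linarith))
      by_cases h30 : -πL ^ 3 + πL ^ 6 = 0
      · exact Or.inl h30
      exact Or.inr (v_add_ge hv h30 (Or.inr (le_of_eq hv3'.symm))
        (Or.inr (by rw [hv6]; linarith)))
    rw [hvu] at hmain
    linarith



theorem pv2 : padicValNat 3 2 = 0 := padicValNat.eq_zero_of_not_dvd (by decide)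
theorem pv3 : padicValNat 3 3 = 1 := padicValNat.self (by norm_num)
theorem pv6 : padicValNat 3 6 = 1 := by
  have h : (6:ℕ) = 3 * 2 := by norm_num
  haveI : Fact (Nat.Prime 3) := ⟨by norm_num⟩
  rw [h, padicValNat.mul (by norm_num) (by norm_num), pv3, pv2]
theorem pv9 : padicValNat 3 9 = 2 := by
  have h : (9:ℕ) = 3 ^ 2 := by norm_num
  haveI : Fact (Nat.Prime 3) := ⟨by norm_num⟩
  rw [h, padicValNat.prime_pow]

variable {w : ℕ → ℕ∞}

theorem itilde_vals (h1 : w 1 = ⊤) (h2 : w 2 = 1) (h3 : w 3 = 1) (h4 : w 4 = ⊤)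
    (h5 : w 5 = ⊤) (h6 : w 6 = 1) (h7 : w 7 = ⊤) (h8 : w 8 = ⊤) (h9 : w 9 = 1) :
    itildeIdx 3 9 w 0 = 7 ∧ itildeIdx 3 9 w 1 = 3 ∧ itildeIdx 3 9 w 2 = 0 := by
  refine ⟨le_antisymm ?_ ?_, le_antisymm ?_ ?_, le_antisymm ?_ ?_⟩
  · exact iInf_le_of_le ⟨2, by norm_num [pv2]⟩ (by rw [h2]; decide)
  · apply le_iInf; rintro ⟨h, hh1, hh9, hval⟩
    dsimp only
    interval_cases h
    · rw [h1]; decide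
    · rw [h2]; decide
    · rw [pv3] at hval; omega
    · rw [h4]; decide
    · rw [h5]; decide
    · rw [pv6] at hval; omega
    · rw [h7]; decide
    · rw [h8]; decide
    · rw [pv9] at hval; omega
  · exact iInf_le_of_le ⟨6, by norm_num [pv6]⟩ (by rw [h6]; decide)
  · apply le_iInf; rintro ⟨h, hh1, hh9, hval⟩
    dsimp only
    interval_cases h
    · rw [h1]; decide
    · rw [h2]; decide
    · rw [h3]; decide
    · rw [h4]; decide
    · rw [h5]; decide
    · rw [h6]; decide
    · rw [h7]; decide
    · rw [h8]; decide
    · rw [pv9] at hval; omega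
  · exact iInf_le_of_le ⟨9, by norm_num [pv9]⟩ (by rw [h9]; decide)
  · apply le_iInf; rintro ⟨h, hh1, hh9, hval⟩
    dsimp only
    interval_cases h <;> simp

theorem insep_vals {eK : ℕ∞} (heK : 1 ≤ eK)
    (h0 : itildeIdx 3 9 w 0 = 7) (h1 : itildeIdx 3 9 w 1 = 3)
    (h2 : itildeIdx 3 9 w 2 = 0) :
    insepIdx 3 9 2 eK w 0 = 7 ∧ insepIdx 3 9 2 eK w 1 = 3 ∧
      insepIdx 3 9 2 eK w 2 = 0 := by
  refine ⟨le_antisymm ?_ ?_, le_antisymm ?_ ?_, le_antisymm ?_ ?_⟩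
  · exact iInf_le_of_le ⟨0, by norm_num⟩ (by rw [h0]; simp)
  · apply le_iInf; rintro ⟨j', hj0, hj2⟩
    dsimp only
    interval_cases j'
    · rw [h0]; exact le_self_add
    · rw [h1]
      calc (7:ℕ∞) ≤ 3 + ((1:ℕ∞) - 0) * 9 * 1 := by decide
        _ ≤ 3 + ((1:ℕ∞) - 0) * 9 * eK := by gcongr
    · rw [h2]
      calc (7:ℕ∞) ≤ 0 + ((2:ℕ∞) - 0) * 9 * 1 := by decide
        _ ≤ 0 + ((2:ℕ∞) - 0) * 9 * eK := by gcongr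
  · exact iInf_le_of_le ⟨1, by norm_num⟩ (by rw [h1]; simp)
  · apply le_iInf; rintro ⟨j', hj1, hj2⟩
    dsimp only
    interval_cases j'
    · rw [h1]; exact le_self_add
    · rw [h2]
      calc (3:ℕ∞) ≤ 0 + ((2:ℕ∞) - 1) * 9 * 1 := by decide
        _ ≤ 0 + ((2:ℕ∞) - 1) * 9 * eK := by gcongr
  · exact iInf_le_of_le ⟨2, by norm_num⟩ (by rw [h2]; simp)
  · apply le_iInf; rintro ⟨j', hj2, hj2'⟩
    dsimp only
    interval_cases j'
    rw [h2]; exact le_self_add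


theorem eq_of_monic_dvd {K : Type} [Field K] {p q : Polynomial K}
    (hp : p.Monic) (hq : q.Monic) (hdvd : p ∣ q)
    (hdeg : q.natDegree ≤ p.natDegree) : p = q := by
  obtain ⟨c, hc⟩ := hdvd
  have hc0 : c ≠ 0 := by rintro rfl; rw [mul_zero] at hc; exact hq.ne_zero hc
  have hdc : q.natDegree = p.natDegree + c.natDegree := by
    rw [hc, Polynomial.natDegree_mul hp.ne_zero hc0]
  have hc1 : c = 1 := by
    have hcm : c.Monic := by
      have h2 := hq.leadingCoeff
      rw [hc, Polynomial.leadingCoeff_mul, hp.leadingCoeff, one_mul] at h2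
      exact h2
    exact Polynomial.eq_one_of_monic_natDegree_zero hcm (by omega)
  rw [hc, hc1, mul_one]

end Stmt16Aux

/-- a root of `X^9 + π_K X^7 − π_K X^6 + π_K X^3 − π_K` over a
complete discretely valued field of residue characteristic 3 generates a
totally ramified extension of degree 9 with indices of inseparability
`i₀ = 7`, `i₁ = 3`, `i₂ = 0`. -/
theorem stmt16 (K L : Type) [Field K] [Field L] [Algebra K L]
    (v : L → ℚ) (hv : ExtValuation K L v (Module.finrank K L))
    (hres : ResidueCharP K L v 3)
    (πK : K) (hπK : πK ≠ 0 ∧ v (algebraMap K L πK) = 1)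
    (f : Polynomial K)
    (hf : f = X ^ 9 + C πK * X ^ 7 - C πK * X ^ 6 + C πK * X ^ 3 - C πK)
    (πL : L) (hroot : Polynomial.aeval πL f = 0)
    (hgen : Algebra.adjoin K {πL} = ⊤) :
    Module.finrank K L = 9 ∧ v πL = 1 / 9 ∧
    insepIdx 3 9 2 (eAbs K L v 3) (coeffVal K L v 9 πL) 0 = 7 ∧
    insepIdx 3 9 2 (eAbs K L v 3) (coeffVal K L v 9 πL) 1 = 3 ∧
    insepIdx 3 9 2 (eAbs K L v 3) (coeffVal K L v 9 πL) 2 = 0 := by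

  classical
  obtain ⟨hπK0, hπKv⟩ := hπK
  set a : L := algebraMap K L πK with hadef
  have hinj : Function.Injective (algebraMap K L) := (algebraMap K L).injective
  have ha0 : a ≠ 0 := fun h => hπK0 (hinj (by rw [← hadef, h, map_zero]))
  -- πL ≠ 0
  have hπL0 : πL ≠ 0 := by
    rintro rfl
    rw [hf] at hroot
    simp only [map_add, map_sub, map_mul, map_pow, aeval_X, aeval_C] at hroot
    simp only [ne_eq, OfNat.ofNat_ne_zero, not_false_eq_true, zero_pow, zero_mul,
      mul_zero, add_zero, zero_add, zero_sub, sub_zero, neg_eq_zero] at hroot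
    exact ha0 hroot
  -- the key polynomial identity
  have heq : πL ^ 9 = a * (1 - πL ^ 3 + πL ^ 6 - πL ^ 7) := by
    rw [hf] at hroot
    simp only [map_add, map_sub, map_mul, map_pow, aeval_X, aeval_C] at hroot
    rw [← hadef] at hroot
    linear_combination hroot
  -- valuation of πL
  have hvπL : v πL = 1 / 9 := Stmt16Aux.v_piL hv ha0 hπKv hπL0 heq
  -- degree facts
  have hfm : f.Monic := by rw [hf]; monicity!
  have hfdeg : f.natDegree = 9 := by rw [hf]; compute_degree!
  have hint : IsIntegral K πL := ⟨f, hfm, hroot⟩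
  have hdvd : minpoly K πL ∣ f := minpoly.dvd K πL hroot
  have hfin : Module.finrank K L = (minpoly K πL).natDegree := by
    let pb := Algebra.adjoin.powerBasis hint
    have e : Algebra.adjoin K {πL} ≃ₐ[K] L :=
      (Subalgebra.equivOfEq _ _ hgen).trans Subalgebra.topEquiv
    have h9 := (pb.map e).finrank
    rw [h9]; simp [pb, Algebra.adjoin.powerBasis_dim]
  have hdle : (minpoly K πL).natDegree ≤ 9 := by
    rw [← hfdeg]
    exact Polynomial.natDegree_le_of_dvd hdvd hfm.ne_zero
  have hdpos : 0 < (minpoly K πL).natDegree := minpoly.natDegree_pos hint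
  -- finrank = 9
  have hn9 : Module.finrank K L = 9 := by
    obtain ⟨m, hm⟩ := hv.denom πL hπL0
    rw [hvπL] at hm
    have hnpos : 0 < Module.finrank K L := by omega
    have hnle : Module.finrank K L ≤ 9 := by omega
    have h9m : (9 : ℚ) * m = (Module.finrank K L : ℚ) := by
      have hne : (Module.finrank K L : ℚ) ≠ 0 := by positivity
      field_simp at hm
      linarith
    have h9m' : 9 * m = (Module.finrank K L : ℤ) := by exact_mod_cast h9m
    omega
  refine ⟨hn9, by rw [hvπL], ?_⟩
  -- minpoly = f
  have hmp : minpoly K πL = f := by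
    refine Stmt16Aux.eq_of_monic_dvd (minpoly.monic hint) hfm hdvd ?_
    rw [hfdeg]; omega
  -- coefficient valuations
  have hvneg : v (-a) = 1 := by rw [Stmt16Aux.v_neg hv ha0, hπKv]
  have hmapneg : algebraMap K L (-πK) = -a := by rw [map_neg, hadef]
  have hcoeffs : f.coeff 9 = 1 ∧ f.coeff 8 = 0 ∧ f.coeff 7 = πK ∧ f.coeff 6 = -πK ∧
      f.coeff 5 = 0 ∧ f.coeff 4 = 0 ∧ f.coeff 3 = πK ∧ f.coeff 2 = 0 ∧
      f.coeff 1 = 0 ∧ f.coeff 0 = -πK := by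
    rw [hf]
    norm_num [coeff_X_pow, coeff_C]
  obtain ⟨hc9, hc8, hc7, hc6, hc5, hc4, hc3, hc2, hc1, hc0⟩ := hcoeffs
  have hπKneg0 : -πK ≠ 0 := neg_ne_zero.mpr hπK0
  set w : ℕ → ℕ∞ := coeffVal K L v 9 πL with hwdef
  have hw1 : w 1 = ⊤ := by rw [hwdef]; unfold coeffVal; rw [hmp]; norm_num [hc8]
  have hw4 : w 4 = ⊤ := by rw [hwdef]; unfold coeffVal; rw [hmp]; norm_num [hc5]
  have hw5 : w 5 = ⊤ := by rw [hwdef]; unfold coeffVal; rw [hmp]; norm_num [hc4]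
  have hw7 : w 7 = ⊤ := by rw [hwdef]; unfold coeffVal; rw [hmp]; norm_num [hc2]
  have hw8 : w 8 = ⊤ := by rw [hwdef]; unfold coeffVal; rw [hmp]; norm_num [hc1]
  have hw2 : w 2 = 1 := by
    rw [hwdef]; unfold coeffVal; rw [hmp]
    norm_num [hc7, hπK0, ← hadef, hπKv]
  have hw6 : w 6 = 1 := by
    rw [hwdef]; unfold coeffVal; rw [hmp]
    norm_num [hc3, hπK0, ← hadef, hπKv]
  have hw3 : w 3 = 1 := by
    rw [hwdef]; unfold coeffVal; rw [hmp]
    norm_num [hc6, hπKneg0, hmapneg, hvneg]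
  have hw9 : w 9 = 1 := by
    rw [hwdef]; unfold coeffVal; rw [hmp]
    norm_num [hc0, hπKneg0, hmapneg, hvneg]
  -- e_K ≥ 1
  have heK : 1 ≤ eAbs K L v 3 := by
    unfold eAbs
    by_cases h3 : ((3 : ℕ) : K) = 0
    · rw [if_pos h3]; exact le_top
    · rw [if_neg h3]
      rcases hres with h | hpos
      · exact absurd h h3
      obtain ⟨m, hm⟩ := hv.int_on_base ((3 : ℕ) : K) h3
      rw [hm] at hpos ⊢
      have hm1 : 1 ≤ m := by exact_mod_cast hpos
      rw [Rat.num_intCast]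
      exact_mod_cast (by omega : 1 ≤ m.toNat)
  obtain ⟨hi0, hi1, hi2⟩ := Stmt16Aux.itilde_vals hw1 hw2 hw3 hw4 hw5 hw6 hw7 hw8 hw9
  obtain ⟨hj0, hj1, hj2⟩ := Stmt16Aux.insep_vals heK hi0 hi1 hi2
  exact ⟨hj0, hj1, hj2⟩
end
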